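/- Discrete error bound (abstract form of inequality (4.11)/(eq. intermediate:b) in the proof of Lemma 4.5): under the inf-sup condition and the consistency relation there exists a constant C > 0 depending only on the inf-sup constant c such that for every v ∈ Σ one has ‖v − u_h‖_{m,s} ≤ C · ( m(u − v, u − v)^{1/2} + s(v, v)^{1/2} + ‖Dv − Du_h‖ ). -/

import Mathlib

/-!
Write `a = m + s` and `d = v - u_h`. Testing the consistency relation with the inf-sup
partner `w` of `e` (which has `a(w, w) ≤ 1`) and splitting `a(u_h, w) - m(u, w)` through `v`
gives `c‖e‖ ≤ ‖d‖_a + ‖u - v‖_m + ‖v‖_s`. Testing it with `d` itself gives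
`‖d‖_a² ≤ (‖u - v‖_m + ‖v‖_s) ‖d‖_a + ‖D d‖ ‖e‖`. Eliminating `‖e‖` leaves a quadratic
inequality in `‖d‖_a` whose positive root is at most `(1 + 2/c)` times the right-hand side.
-/

open Real

namespace LinearMap.BilinForm

variable {X : Type*} [AddCommGroup X] [Module ℝ X] {B : LinearMap.BilinForm ℝ X}

theorem abs_apply_le_sqrt_mul_sqrt (hB : B.IsPosSemidef) (x y : X) :
    |B x y| ≤ √(B x x) * √(B y y) := by
  rw [← sqrt_mul (hB.isNonneg.nonneg x)]
  exact abs_le_sqrt (apply_sq_le_of_symm B hB.isNonneg.nonneg (isSymm_iff.mp hB.isSymm) x y)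

theorem abs_apply_le_sqrt_of_apply_self_le_one (hB : B.IsPosSemidef) {y : X} (hy : B y y ≤ 1)
    (x : X) : |B x y| ≤ √(B x x) :=
  calc |B x y| ≤ √(B x x) * √(B y y) := abs_apply_le_sqrt_mul_sqrt hB x y
    _ ≤ √(B x x) * 1 := by gcongr; exact sqrt_le_one.mpr hy
    _ = √(B x x) := mul_one _

end LinearMap.BilinForm

theorem le_one_add_two_div_mul_of_mul_sq_le {c R x : ℝ} (hc : 0 < c) (hR : 0 ≤ R)
    (h : c * x ^ 2 ≤ (c + 1) * R * x + R ^ 2) : x ≤ (1 + 2 / c) * R := by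
  have hR' : R ≤ (1 + 2 / c) * R :=
    le_mul_of_one_le_left hR (le_add_of_nonneg_right (by positivity))
  rcases le_or_gt x R with hxR | hRx
  · exact hxR.trans hR'
  · have hx : 0 < x := hR.trans_lt hRx
    have : c * x ≤ (c + 2) * R := by
      refine le_of_mul_le_mul_right ?_ hx
      nlinarith [mul_le_mul_of_nonneg_left hRx.le hR]
    rw [one_add_div hc.ne', div_mul_eq_mul_div, le_div_iff₀ hc]
    linarith

section DiscreteError

variable {X : Type*} [AddCommGroup X] [Module ℝ X]
  {Q : Type*} [NormedAddCommGroup Q] [InnerProductSpace ℝ Q]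
  {Sig : Submodule ℝ X} {m s : LinearMap.BilinForm ℝ X} {D : Sig →ₗ[ℝ] Q}
  {u : X} {uh : Sig} {e : Q}

open LinearMap.BilinForm

theorem inner_le_of_consistency (hm : m.IsPosSemidef) (hs : s.IsPosSemidef)
    (hcons : ∀ w : Sig, (m + s) uh w - m u w = inner ℝ (D w) e)
    {w : Sig} (hw : (m + s) w w ≤ 1) (v : Sig) :
    inner ℝ (D w) e
      ≤ √((m + s) (v - uh) (v - uh)) + √(m (u - v) (u - v)) + √(s v v) := by
  have hmw : m w w ≤ 1 := by
    have := hs.isNonneg.nonneg w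
    simp only [LinearMap.add_apply] at hw; linarith
  have hsw : s w w ≤ 1 := by
    have := hm.isNonneg.nonneg w
    simp only [LinearMap.add_apply] at hw; linarith
  have hsplit : inner ℝ (D w) e
      = -(m + s) ((v : X) - uh) w - m (u - v) w + s v w := by
    rw [← hcons w]
    simp only [map_sub, LinearMap.sub_apply, LinearMap.add_apply]
    ring
  have h₁ := abs_apply_le_sqrt_of_apply_self_le_one (hm.add hs) hw ((v : X) - uh)
  have h₂ := abs_apply_le_sqrt_of_apply_self_le_one hm hmw (u - v)
  have h₃ := abs_apply_le_sqrt_of_apply_self_le_one hs hsw (v : X)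
  rw [hsplit]
  linarith [neg_le_abs ((m + s) ((v : X) - uh) w), neg_le_abs (m (u - v) w),
    le_abs_self (s v w)]

theorem apply_self_le_of_consistency (hm : m.IsPosSemidef) (hs : s.IsPosSemidef)
    (hcons : ∀ w : Sig, (m + s) uh w - m u w = inner ℝ (D w) e) (v : Sig) :
    (m + s) (v - uh) (v - uh)
      ≤ (√(m (u - v) (u - v)) + √(s v v)) * √((m + s) (v - uh) (v - uh))
        + ‖D (v - uh)‖ * ‖e‖ := by
  set d : X := (v : X) - uh
  have hd : ((v - uh : Sig) : X) = d := rfl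
  have hidentity : (m + s) d d = -m (u - v) d + s v d - inner ℝ (D (v - uh)) e := by
    rw [← hcons, hd]
    simp only [d, map_sub, LinearMap.sub_apply, LinearMap.add_apply]
    ring
  have hmd : √(m d d) ≤ √((m + s) d d) :=
    sqrt_le_sqrt (le_add_of_nonneg_right (hs.isNonneg.nonneg d))
  have hsd : √(s d d) ≤ √((m + s) d d) :=
    sqrt_le_sqrt (le_add_of_nonneg_left (hm.isNonneg.nonneg d))
  have h₁ := (neg_le_abs _).trans (abs_apply_le_sqrt_mul_sqrt hm (u - v) d)
  have h₂ := (le_abs_self _).trans (abs_apply_le_sqrt_mul_sqrt hs (v : X) d)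
  have h₃ := (neg_le_abs _).trans (abs_real_inner_le_norm (D (v - uh)) e)
  linarith [mul_le_mul_of_nonneg_left hmd (sqrt_nonneg (m (u - v) (u - v))),
    mul_le_mul_of_nonneg_left hsd (sqrt_nonneg (s v v))]

theorem sqrt_apply_self_le_of_infSup {c : ℝ} (hc : 0 < c)
    (hm : m.IsPosSemidef) (hs : s.IsPosSemidef)
    (hinfsup : ∃ w : Sig, (m + s) w w ≤ 1 ∧ c * ‖e‖ ≤ inner ℝ (D w) e)
    (hcons : ∀ w : Sig, (m + s) uh w - m u w = inner ℝ (D w) e) (v : Sig) :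
    √((m + s) (v - uh) (v - uh))
      ≤ (1 + 2 / c) * (√(m (u - v) (u - v)) + √(s v v) + ‖D (v - uh)‖) := by
  obtain ⟨w, hw, hwe⟩ := hinfsup
  set x := √((m + s) (v - uh) (v - uh))
  set A := √(m (u - v) (u - v))
  set B := √(s v v)
  set N := ‖D (v - uh)‖
  have he : c * ‖e‖ ≤ x + A + B := hwe.trans (inner_le_of_consistency hm hs hcons hw v)
  have hx2 : x ^ 2 ≤ (A + B) * x + N * ‖e‖ := by
    rw [sq_sqrt ((hm.add hs).isNonneg.nonneg _)]
    exact apply_self_le_of_consistency hm hs hcons v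
  have hx : 0 ≤ x := sqrt_nonneg _
  have hA : 0 ≤ A := sqrt_nonneg _
  have hB : 0 ≤ B := sqrt_nonneg _
  have hN : 0 ≤ N := norm_nonneg _
  refine le_one_add_two_div_mul_of_mul_sq_le hc (by positivity) ?_
  nlinarith [mul_le_mul_of_nonneg_left he hN, mul_nonneg hN hx, mul_nonneg hN (add_nonneg hA hB)]

end DiscreteError

/-- Discrete error bound (abstract form of inequality (4.11)/(eq.
intermediate:b) in the proof of Lemma 4.5): under the inf-sup condition and the
consistency relation there exists `C > 0` depending only on the inf-sup
constant `c` such that for every `v ∈ Σ`,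
`‖v − u_h‖_{m,s} ≤ C · ( m(u − v, u − v)^{1/2} + s(v, v)^{1/2} + ‖Dv − Du_h‖ )`. -/
theorem discrete_error_bound (c : ℝ) (hc : 0 < c) :
    ∃ C : ℝ, 0 < C ∧
      ∀ (X : Type) [AddCommGroup X] [Module ℝ X]
        (Q : Type) [NormedAddCommGroup Q] [InnerProductSpace ℝ Q]
        (Sig : Submodule ℝ X)
        (m s : X →ₗ[ℝ] X →ₗ[ℝ] ℝ),
        (∀ x y : X, m x y = m y x) →
        (∀ x : X, 0 ≤ m x x) →
        (∀ x y : X, s x y = s y x) →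
        (∀ x : X, 0 ≤ s x x) →
        ∀ (D : Sig →ₗ[ℝ] Q),
        -- inf-sup condition
        (∀ p : Q, ∃ w : Sig,
            Real.sqrt (m (w : X) (w : X) + s (w : X) (w : X) + ‖D w‖ ^ 2) = 1 ∧
            c * ‖p‖ ≤ (inner ℝ (D w) p : ℝ)) →
        ∀ (u : X) (uh : Sig) (e : Q),
        -- consistency relation
        (∀ w : Sig,
            m (uh : X) (w : X) + s (uh : X) (w : X) - m u (w : X)
              = (inner ℝ (D w) e : ℝ)) →
        ∀ v : Sig,
          Real.sqrt (m ((v : X) - (uh : X)) ((v : X) - (uh : X))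
              + s ((v : X) - (uh : X)) ((v : X) - (uh : X)))
            ≤ C * (Real.sqrt (m (u - (v : X)) (u - (v : X)))
              + Real.sqrt (s (v : X) (v : X)) + ‖D v - D uh‖) := by
  refine ⟨1 + 2 / c, by positivity, ?_⟩
  intro X _ _ Q _ _ Sig m s hmsym hmpos hssym hspos D hinfsup u uh e hcons v
  have hm : LinearMap.BilinForm.IsPosSemidef m := ⟨⟨hmsym⟩, ⟨hmpos⟩⟩
  have hs : LinearMap.BilinForm.IsPosSemidef s := ⟨⟨hssym⟩, ⟨hspos⟩⟩
  have hinfsup_e : ∃ w : Sig, (m + s) w w ≤ 1 ∧ c * ‖e‖ ≤ inner ℝ (D w) e := by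
    obtain ⟨w, hw, hwe⟩ := hinfsup e
    rw [sqrt_eq_one] at hw
    exact ⟨w, by simp only [LinearMap.add_apply]; nlinarith [sq_nonneg ‖D w‖], hwe⟩
  have hbound := sqrt_apply_self_le_of_infSup hc hm hs hinfsup_e hcons v
  rwa [map_sub D] at hbound
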